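/- arXiv:2509.10041 — 2 statements merged into one kernel-verified Lean document; each statement's English description precedes it below -/
import Mathlib

section
/- Let w, w' ∈ R^n with ‖w − w'‖₂ ≤ Δ, ‖w‖₂ ≥ σ_min > 0, and ‖w‖₂ ≤ ‖w'‖₂. If ε ≥ (Δ/σ_min)·m, then for every z ∈ R^m the Gaussian density ratio satisfies P_Z(z)/P_{Z'}(z) ≤ e^ε, where P_Z, P_{Z'} are the densities of N(0, ‖w‖₂² I_m) and N(0, ‖w'‖₂² I_m). -/
open Real

/-- Density of the multivariate Gaussian `N(0, σ² I_m)` at `z ∈ ℝᵐ`. -/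
noncomputable def gaussDensity (m : ℕ) (σ : ℝ) (z : Fin m → ℝ) : ℝ :=
  (2 * Real.pi * σ ^ 2) ^ (-(m : ℝ) / 2) * Real.exp (-(∑ j, z j ^ 2) / (2 * σ ^ 2))

/-- Lemma 1 of the paper: upper bound on the Gaussian density ratio. -/
theorem stmt2 (n m : ℕ) (hm : 1 ≤ m) (Δ σmin ε : ℝ) (hΔ : 0 < Δ) (hσ : 0 < σmin)
    (w w' : EuclideanSpace ℝ (Fin n))
    (hnear : ‖w - w'‖ ≤ Δ) (hmin : σmin ≤ ‖w‖) (hle : ‖w‖ ≤ ‖w'‖)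
    (hε : (Δ / σmin) * m ≤ ε) :
    ∀ z : Fin m → ℝ,
      gaussDensity m ‖w‖ z / gaussDensity m ‖w'‖ z ≤ Real.exp ε := by
  intro z
  set a := ‖w‖ with ha_def
  set b := ‖w'‖ with hb_def
  have ha : 0 < a := lt_of_lt_of_le hσ hmin
  have hb : 0 < b := lt_of_lt_of_le ha hle
  have hbΔ : b ≤ a + Δ := by
    calc b = ‖w - (w - w')‖ := by rw [sub_sub_cancel]
    _ ≤ ‖w‖ + ‖w - w'‖ := norm_sub_le _ _
    _ ≤ a + Δ := by gcongr
  have hπ := Real.pi_pos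
  set S := ∑ j, z j ^ 2 with hS_def
  have hS : 0 ≤ S := Finset.sum_nonneg fun j _ => sq_nonneg _
  have hpa : (0:ℝ) < 2 * Real.pi * a ^ 2 := by positivity
  have hpb : (0:ℝ) < 2 * Real.pi * b ^ 2 := by positivity
  -- ratio of base: (b/a)^m ≤ exp ε
  have hratio : (b / a) ^ m ≤ Real.exp ε := by
    have h1 : b / a ≤ 1 + Δ / σmin := by
      rw [div_le_iff₀ ha]
      have : Δ / σmin * a ≥ Δ := by
        rw [ge_iff_le, div_mul_eq_mul_div, le_div_iff₀ hσ]
        nlinarith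
      nlinarith
    have h2 : (1 : ℝ) + Δ / σmin ≤ Real.exp (Δ / σmin) := by
      have := Real.add_one_le_exp (Δ / σmin)
      linarith
    have h3 : (b / a) ^ m ≤ (Real.exp (Δ / σmin)) ^ m := by
      apply pow_le_pow_left₀ (by positivity) (h1.trans h2)
    calc (b / a) ^ m ≤ (Real.exp (Δ / σmin)) ^ m := h3
    _ = Real.exp (Δ / σmin * m) := by rw [← Real.exp_nat_mul]; ring_nf
    _ ≤ Real.exp ε := Real.exp_le_exp.mpr hε
  -- key rpow inequality
  have key : (2 * Real.pi * b ^ 2) ^ ((m:ℝ)/2) ≤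
      Real.exp ε * (2 * Real.pi * a ^ 2) ^ ((m:ℝ)/2) := by
    have heq : 2 * Real.pi * b ^ 2 = (2 * Real.pi * a ^ 2) * (b / a) ^ 2 := by
      field_simp
    rw [heq, Real.mul_rpow hpa.le (by positivity)]
    have : ((b / a) ^ 2 : ℝ) ^ ((m:ℝ)/2) = (b / a) ^ m := by
      rw [← Real.rpow_natCast (b/a) 2, ← Real.rpow_mul (by positivity)]
      norm_num
      rw [show (2:ℝ) * ((m:ℝ)/2) = (m:ℝ) by ring, Real.rpow_natCast]
    rw [this, mul_comm (Real.exp ε)]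
    exact mul_le_mul_of_nonneg_left hratio (by positivity)
  have hA : (2 * Real.pi * a ^ 2) ^ (-(m:ℝ)/2) ≤
      Real.exp ε * (2 * Real.pi * b ^ 2) ^ (-(m:ℝ)/2) := by
    have hna : (2 * Real.pi * a ^ 2) ^ (-(m:ℝ)/2)
        = ((2 * Real.pi * a ^ 2) ^ ((m:ℝ)/2))⁻¹ := by
      rw [neg_div, Real.rpow_neg hpa.le]
    have hnb : (2 * Real.pi * b ^ 2) ^ (-(m:ℝ)/2)
        = ((2 * Real.pi * b ^ 2) ^ ((m:ℝ)/2))⁻¹ := by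
      rw [neg_div, Real.rpow_neg hpb.le]
    rw [hna, hnb]
    have pa : (0:ℝ) < (2 * Real.pi * a ^ 2) ^ ((m:ℝ)/2) := Real.rpow_pos_of_pos hpa _
    have pb : (0:ℝ) < (2 * Real.pi * b ^ 2) ^ ((m:ℝ)/2) := Real.rpow_pos_of_pos hpb _
    rw [← div_eq_mul_inv, inv_eq_one_div, div_le_div_iff₀ pa pb, one_mul]
    linarith [key]
  have hE : Real.exp (-S / (2 * a ^ 2)) ≤ Real.exp (-S / (2 * b ^ 2)) := by
    apply Real.exp_le_exp.mpr
    rw [neg_div, neg_div, neg_le_neg_iff]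
    apply div_le_div_of_nonneg_left hS (by positivity)
    nlinarith
  have hposb : 0 < gaussDensity m b z := by
    unfold gaussDensity
    have := Real.rpow_pos_of_pos hpb (-(m:ℝ)/2)
    positivity
  rw [div_le_iff₀ hposb]
  unfold gaussDensity
  calc (2 * Real.pi * a ^ 2) ^ (-(m:ℝ)/2) * Real.exp (-S / (2 * a ^ 2))
      ≤ (Real.exp ε * (2 * Real.pi * b ^ 2) ^ (-(m:ℝ)/2)) * Real.exp (-S / (2 * b ^ 2)) := by
        apply mul_le_mul hA hE (Real.exp_nonneg _)
        positivity
  _ = Real.exp ε * ((2 * Real.pi * b ^ 2) ^ (-(m:ℝ)/2) * Real.exp (-S / (2 * b ^ 2))) := by ring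
end

section
/- Let w, w' ∈ R^n with ‖w − w'‖₂ ≤ Δ, ‖w‖₂, ‖w'‖₂ ≥ σ_min > 0, ‖w‖₂ ≤ ‖w'‖₂, and let z ~ N(0, ‖w‖₂² I_m). Then for all z, P_Z(z)/P_{Z'}(z) ≥ exp(−(‖z‖₂²/‖w‖₂²)·(Δ/σ_min)). -/
/-!
The density ratio is `(‖w'‖/‖w‖)^m · exp(-(‖z‖²/2)(1/‖w‖² - 1/‖w'‖²))`. The prefactor is at least
`1`, and `1/a² - 1/b² = (b - a)(b + a)/(a²b²) ≤ 2Δ/(a²σmin)` since `b - a ≤ Δ`, `a ≤ b` and `σmin ≤ b`.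
-/

open Real

theorem gaussDensity_div_gaussDensity {m : ℕ} {a b : ℝ} (ha : 0 < a) (hb : 0 < b)
    (z : Fin m → ℝ) :
    gaussDensity m a z / gaussDensity m b z
      = (b / a) ^ m * exp (-(∑ j, z j ^ 2) / 2 * (1 / a ^ 2 - 1 / b ^ 2)) := by
  have hnorm : (2 * π * a ^ 2) ^ (-(m : ℝ) / 2) / (2 * π * b ^ 2) ^ (-(m : ℝ) / 2)
      = (b / a) ^ m := by
    rw [← div_rpow (by positivity) (by positivity),
      show 2 * π * a ^ 2 / (2 * π * b ^ 2) = ((b / a) ^ 2)⁻¹ by field_simp,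
      inv_rpow (by positivity), ← rpow_neg (by positivity), ← rpow_natCast_mul (by positivity)]
    norm_num [mul_div_cancel₀]
  rw [gaussDensity, gaussDensity, mul_div_mul_comm, hnorm, ← exp_sub]
  congr 2
  ring

theorem inv_sq_sub_inv_sq_le {a b σ Δ : ℝ} (ha : 0 < a) (hab : a ≤ b) (hσ : 0 < σ)
    (hσb : σ ≤ b) (hba : b - a ≤ Δ) :
    1 / a ^ 2 - 1 / b ^ 2 ≤ 2 * Δ / (a ^ 2 * σ) := by
  have hb : 0 < b := ha.trans_le hab
  calc 1 / a ^ 2 - 1 / b ^ 2 = (b - a) * (b + a) / (a ^ 2 * b ^ 2) := by field_simp; ring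
    _ ≤ Δ * (2 * b) / (a ^ 2 * b ^ 2) := by gcongr <;> linarith
    _ = 2 * Δ / (a ^ 2 * b) := by field_simp
    _ ≤ 2 * Δ / (a ^ 2 * σ) := by gcongr; linarith

theorem stmt7_general (n m : ℕ) (Δ σmin : ℝ) (hσ : 0 < σmin)
    (w w' : EuclideanSpace ℝ (Fin n))
    (hnear : ‖w - w'‖ ≤ Δ) (hminw : σmin ≤ ‖w‖) (hminw' : σmin ≤ ‖w'‖)
    (hle : ‖w‖ ≤ ‖w'‖) :
    ∀ z : Fin m → ℝ,
      Real.exp (-((∑ j, z j ^ 2) / ‖w‖ ^ 2) * (Δ / σmin))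
        ≤ gaussDensity m ‖w‖ z / gaussDensity m ‖w'‖ z := by
  intro z
  have hw : 0 < ‖w‖ := hσ.trans_le hminw
  have hdiff : ‖w'‖ - ‖w‖ ≤ Δ :=
    (le_abs_self _).trans <| (abs_norm_sub_norm_le w' w).trans (norm_sub_rev w' w ▸ hnear)
  have hS : 0 ≤ ∑ j, z j ^ 2 := Finset.sum_nonneg fun j _ => sq_nonneg (z j)
  rw [gaussDensity_div_gaussDensity hw (hw.trans_le hle)]
  calc exp (-((∑ j, z j ^ 2) / ‖w‖ ^ 2) * (Δ / σmin))
      = exp (-(∑ j, z j ^ 2) / 2 * (2 * Δ / (‖w‖ ^ 2 * σmin))) := by ring_nf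
    _ ≤ exp (-(∑ j, z j ^ 2) / 2 * (1 / ‖w‖ ^ 2 - 1 / ‖w'‖ ^ 2)) := by
        gcongr exp ?_
        exact mul_le_mul_of_nonpos_left (inv_sq_sub_inv_sq_le hw hle hσ hminw' hdiff)
          (by linarith)
    _ ≤ (‖w'‖ / ‖w‖) ^ m * exp (-(∑ j, z j ^ 2) / 2 * (1 / ‖w‖ ^ 2 - 1 / ‖w'‖ ^ 2)) :=
        le_mul_of_one_le_left (exp_pos _).le (one_le_pow₀ ((one_le_div hw).mpr hle))

/-- pointwise lower bound on the Gaussian density ratio. -/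
theorem stmt7 (n m : ℕ) (Δ σmin : ℝ) (hΔ : 0 < Δ) (hσ : 0 < σmin)
    (w w' : EuclideanSpace ℝ (Fin n))
    (hnear : ‖w - w'‖ ≤ Δ) (hminw : σmin ≤ ‖w‖) (hminw' : σmin ≤ ‖w'‖)
    (hle : ‖w‖ ≤ ‖w'‖) :
    ∀ z : Fin m → ℝ,
      Real.exp (-((∑ j, z j ^ 2) / ‖w‖ ^ 2) * (Δ / σmin))
        ≤ gaussDensity m ‖w‖ z / gaussDensity m ‖w'‖ z :=
  stmt7_general n m Δ σmin hσ w w' hnear hminw hminw' hle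
end
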